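/- arXiv:1807.04327 — 3 statements merged into one kernel-verified Lean document; each statement's English description precedes it below -/
import Mathlib

section
/- Let ρ ≥ 1, ε > 0, ν ∈ {0,1,2,3}, f ∈ C^{ν+2}(ℝ³) and g ∈ C^{ν+1}(ℝ³) supported in {|x| ≤ ρ}, and let u⁰ be the Kirchhoff solution of the free wave equation with data (εf, ε(f+g)). Then there is a constant γ (independent of f, g, ε, ρ) such that for all multi-indices α with |α| ≤ ν and all x ∈ ℝ³, t ≥ 0, one has ρ^{|α|} |D_x^α u⁰(x,t)| ≤ ε γ ((t+ρ)/ρ)^{−1} N_ν, where N_ν = Σ_{|α|≤ν+2} sup_x ρ^{|α|}|D_x^α f(x)| + Σ_{|β|≤ν+1} sup_x ρ^{|β|+1}(|D_x^β f(x)| + |D_x^β g(x)|). Moreover u⁰(x,t) = 0 whenever |t − |x|| ≥ ρ. -/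
open MeasureTheory Metric Real Set

noncomputable section

/-- Euclidean 3-space. -/
abbrev E3 : Type := EuclideanSpace ℝ (Fin 3)

/-- surface measure on the unit sphere of `ℝ³` -/
def sphMeasure : Measure (sphere (0 : E3) 1) := (volume : Measure E3).toSphere

/-- surface integral over the unit sphere -/
def sphInt (h : E3 → ℝ) : ℝ := ∫ ξ : sphere (0 : E3) 1, h (ξ : E3) ∂sphMeasure

/-- The Duhamel-type integral operator `L`. -/
def Lop (p : ℝ) (w : E3 → ℝ → ℝ) (x : E3) (t : ℝ) : ℝ :=
  (1 / (4 * π)) * ∫ s in (0:ℝ)..t,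
    (t - s) * (1 + s) ^ (-(p - 1)) * sphInt (fun η => w (x + (t - s) • η) s)

/-- Kirchhoff's solution of the free wave equation with data `(ε f, ε (f + g))`. -/
def kirch (ε : ℝ) (f g : E3 → ℝ) (x : E3) (t : ℝ) : ℝ :=
  ε * (t / (4 * π)) * sphInt (fun ξ => f (x + t • ξ) + g (x + t • ξ)) +
    ε * deriv (fun τ : ℝ => (τ / (4 * π)) * sphInt (fun ξ => f (x + τ • ξ))) t

/-- `γ(p,5) = 2 + 6p - 4p²` -/
def gam5 (p : ℝ) : ℝ := 2 + 6 * p - 4 * p ^ 2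

/-- Strauss exponent `p_S(5)` -/
def pS5 : ℝ := (3 + Real.sqrt 17) / 4

/-- the exponent `q` -/
def qexp (p : ℝ) : ℝ := max (2 * (p - 1)) 1

/-- the exponent `q̄` -/
def qbar (p : ℝ) : ℝ := max 0 (2 * p - 3)

/-- the weight `w(r,t)` -/
def wgt (p ρ r t : ℝ) : ℝ :=
  if p = 3 / 2 then
    ρ⁻¹ * (t + r + 2 * ρ) * (Real.log (2 * (t + r + 2 * ρ) / (t - r + 2 * ρ)))⁻¹
  else
    ρ ^ (-(2 * (p - 1))) * (t + r + 2 * ρ) ^ qexp p * (t - r + 2 * ρ) ^ qbar p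

/-- the weighted `L^∞` norm on `ℝ³ × [0,T)` -/
def wnorm (p ρ T : ℝ) (u : E3 → ℝ → ℝ) : ℝ :=
  sSup {y : ℝ | ∃ x : E3, ∃ t : ℝ, 0 ≤ t ∧ t < T ∧ y = wgt p ρ ‖x‖ t * |u x t|}

/-- the norm `‖u⁰‖₀` -/
def wnorm0 (ρ : ℝ) (u : E3 → ℝ → ℝ) : ℝ :=
  sSup {y : ℝ | ∃ x : E3, ∃ t : ℝ, 0 ≤ t ∧ y = ρ⁻¹ * (t + ‖x‖ + 2 * ρ) * |u x t|}

/-- the quantity `D(T)` -/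
def DT (p ρ T : ℝ) : ℝ :=
  if p < pS5 then ((2 * T + 3 * ρ) / ρ) ^ (gam5 p / 2)
  else if p = pS5 then Real.log ((T + 2 * ρ) / ρ)
  else 1

/-- spherical mean of a function on `ℝ³ × [0,T)` -/
def sphMean (v : E3 → ℝ → ℝ) (r t : ℝ) : ℝ :=
  (1 / (4 * π)) * sphInt (fun ξ => v (r • ξ) t)

/-- the region `R(r,t)` -/
def Rset (r t : ℝ) : Set (ℝ × ℝ) :=
  {q | t - r ≤ q.2 + q.1 ∧ q.2 + q.1 ≤ t + r ∧ q.2 - q.1 ≤ t - r ∧ 0 ≤ q.2}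

/-- `m(p)` -/
def mexp (p : ℝ) : ℕ := if p < 2 then 1 else 2

end

/-- the quantity `N_ν` of Lemma 2.1, with `D^α`-sups rendered via `iteratedFDeriv` -/
noncomputable def Nnorm (ρ : ℝ) (ν : ℕ) (f g : E3 → ℝ) : ℝ :=
  (∑ k ∈ Finset.range (ν + 3), ⨆ x : E3, ρ ^ k * ‖iteratedFDeriv ℝ k f x‖) +
    ∑ k ∈ Finset.range (ν + 2),
      ⨆ x : E3, ρ ^ (k + 1) * (‖iteratedFDeriv ℝ k f x‖ + ‖iteratedFDeriv ℝ k g x‖)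

section MeasureAux

open scoped ENNReal

instance sphMeasure_finite : IsFiniteMeasure sphMeasure := by
  unfold sphMeasure; infer_instance

lemma abs_coord_le_norm (y : E3) (i : Fin 3) : |y i| ≤ ‖y‖ := by
  rw [EuclideanSpace.norm_eq]
  rw [← Real.sqrt_sq_eq_abs]
  apply Real.sqrt_le_sqrt
  have : |y i| ^ 2 ≤ ∑ j : Fin 3, ‖y j‖ ^ 2 := by
    have := Finset.single_le_sum (f := fun j => ‖y j‖ ^ 2) (fun j _ => by positivity)
      (Finset.mem_univ i)
    simpa [Real.norm_eq_abs, sq_abs] using this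
  simpa [sq_abs] using this

lemma vol_closedBall_le (c : E3) (r : ℝ) (hr : 0 ≤ r) :
    volume (closedBall c r) ≤ ENNReal.ofReal ((2 * r) ^ 3) := by
  have hsub : closedBall c r ⊆
      ((MeasurableEquiv.toLp 2 (Fin 3 → ℝ)).symm) ⁻¹' (univ.pi fun i => Icc (c i - r) (c i + r)) := by
    intro y hy
    simp only [mem_preimage, mem_pi, mem_univ, forall_true_left]
    intro i
    have h1 : |y i - c i| ≤ ‖y - c‖ := by
      have := abs_coord_le_norm (y - c) i
      simpa using this
    have h2 : ‖y - c‖ ≤ r := by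
      rw [← dist_eq_norm]; exact mem_closedBall.1 hy
    have := abs_le.1 (h1.trans h2)
    have heq : ((MeasurableEquiv.toLp 2 (Fin 3 → ℝ)).symm) y i = y i := rfl
    rw [heq]
    constructor <;> [linarith [this.1]; linarith [this.2]]
  refine le_trans (measure_mono hsub) ?_
  rw [(EuclideanSpace.volume_preserving_symm_measurableEquiv_toLp (Fin 3)).measure_preimage
    (MeasurableSet.univ_pi (fun i => measurableSet_Icc)).nullMeasurableSet]
  rw [volume_pi_pi]
  simp only [Real.volume_Icc]
  have : (c : EuclideanSpace ℝ (Fin 3)) 0 + r - ((c 0) - r) = 2 * r := by ring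
  rw [Finset.prod_congr rfl (fun i _ => by rw [show c i + r - (c i - r) = 2 * r by ring])]
  rw [Finset.prod_const]
  rw [← ENNReal.ofReal_pow (by linarith)]
  simp

lemma sphMeasure_univ_le : sphMeasure univ ≤ ENNReal.ofReal 24 := by
  have h1 : sphMeasure univ = 3 * volume (ball (0:E3) 1) := by
    rw [sphMeasure, Measure.toSphere_apply_univ, finrank_euclideanSpace_fin]
    norm_num
  rw [h1]
  have h2 : volume (ball (0:E3) 1) ≤ ENNReal.ofReal 8 := by
    refine le_trans (measure_mono ball_subset_closedBall) ?_
    have := vol_closedBall_le 0 1 zero_le_one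
    norm_num at this ⊢
    exact this
  calc 3 * volume (ball (0:E3) 1) ≤ 3 * ENNReal.ofReal 8 := by
        exact mul_le_mul_right h2 3
    _ = ENNReal.ofReal 24 := by
        rw [show (3:ℝ≥0∞) = ENNReal.ofReal 3 by norm_num, ← ENNReal.ofReal_mul] <;> norm_num

end MeasureAux

section BandAux
open MeasureTheory Metric Set
open scoped ENNReal

lemma band_bound {ρ : ℝ} (hρ : 0 < ρ) {t : ℝ} (ht : 0 ≤ t) (x : E3) :
    sphMeasure {ξ : sphere (0:E3) 1 | ‖x + t • (ξ:E3)‖ ≤ ρ} ≤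
      ENNReal.ofReal (600 * ρ^2 / (t+ρ)^2) := by
  have hP : 0 < t + ρ := by linarith
  rcases le_or_gt t ρ with hcase | hcase
  · refine le_trans (measure_mono (subset_univ _)) (le_trans sphMeasure_univ_le ?_)
    apply ENNReal.ofReal_le_ofReal
    rw [le_div_iff₀ (by positivity)]
    nlinarith
  · -- t > ρ > 0
    have ht0 : 0 < t := hρ.trans hcase
    set A : Set (sphere (0:E3) 1) := {ξ | ‖x + t • (ξ:E3)‖ ≤ ρ} with hA_def
    have hA : MeasurableSet A := by
      have : IsClosed A := IsClosed.preimage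
        ((continuous_const.add (continuous_subtype_val.const_smul t)).norm) isClosed_Iic
      exact this.measurableSet
    set J : Set (Ioi (0:ℝ)) := Subtype.val ⁻¹' (Ico t (t+ρ)) with hJ_def
    have hJ : MeasurableSet J := measurable_subtype_coe measurableSet_Ico
    have hdim : Module.finrank ℝ E3 - 1 = 2 := by
      rw [finrank_euclideanSpace_fin]
    -- measure of J
    have hνJ : ENNReal.ofReal (t^2) * ENNReal.ofReal ρ ≤ Measure.volumeIoiPow 2 J := by
      have h1 : Measure.volumeIoiPow 2 J
          = ∫⁻ (r : Ioi (0:ℝ)) in J, ENNReal.ofReal ((r:ℝ) ^ 2) ∂(Measure.comap Subtype.val volume) := by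
        rw [Measure.volumeIoiPow, withDensity_apply _ hJ]
      rw [h1, setLIntegral_subtype measurableSet_Ioi _ (fun a : ℝ => ENNReal.ofReal (a ^ 2))]
      have himg : Subtype.val '' J = Ico t (t+ρ) := by
        rw [hJ_def, Subtype.image_preimage_coe]
        apply inter_eq_self_of_subset_right
        intro r hr
        exact lt_of_lt_of_le ht0 hr.1
      rw [himg]
      calc ENNReal.ofReal (t^2) * ENNReal.ofReal ρ
          = ENNReal.ofReal (t^2) * volume (Ico t (t+ρ)) := by
            rw [Real.volume_Ico]; congr 1; ring_nf
        _ = ∫⁻ r in Ico t (t+ρ), ENNReal.ofReal (t^2) ∂volume := by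
            rw [setLIntegral_const]
        _ ≤ ∫⁻ r in Ico t (t+ρ), ENNReal.ofReal (r^2) ∂volume := by
            refine setLIntegral_mono (by measurability) ?_
            intro r hr
            exact ENNReal.ofReal_le_ofReal (by nlinarith [hr.1, hr.2, ht0.le])
    -- measure preserving
    have hMP := (volume : Measure E3).measurePreserving_homeomorphUnitSphereProd
    rw [hdim] at hMP
    have hprod : (Measure.toSphere (volume : Measure E3)).prod (Measure.volumeIoiPow 2) (A ×ˢ J)
        = (Measure.comap Subtype.val (volume : Measure E3)) ((homeomorphUnitSphereProd E3) ⁻¹' (A ×ˢ J)) :=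
      (hMP.measure_preimage (hA.prod hJ).nullMeasurableSet).symm
    -- preimage is inside ball
    have hsub : (homeomorphUnitSphereProd E3) ⁻¹' (A ×ˢ J) ⊆
        (Subtype.val : ({0}ᶜ : Set E3) → E3) ⁻¹' (closedBall (-x) (2*ρ)) := by
      rintro y hy
      obtain ⟨hy1, hy2⟩ := hy
      have hr : ‖(y : E3)‖ ∈ Ico t (t+ρ) := by simpa [hJ_def] using hy2
      have hrpos : (0:ℝ) < ‖(y:E3)‖ := lt_of_lt_of_le ht0 hr.1
      set ξ : E3 := ‖(y:E3)‖⁻¹ • (y:E3) with hξ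
      have hξ1 : ((homeomorphUnitSphereProd E3 y).1 : E3) = ξ := by rw [hξ]; simp
      have hAy : ‖x + t • ξ‖ ≤ ρ := by
        have := hy1
        rw [hA_def] at this
        simpa [hξ1] using this
      have hy_eq : (y : E3) = ‖(y:E3)‖ • ξ := by
        rw [hξ, smul_inv_smul₀ (ne_of_gt hrpos)]
      have hnξ : ‖ξ‖ = 1 := by
        rw [hξ, norm_smul, norm_inv, norm_norm, inv_mul_cancel₀ (ne_of_gt hrpos)]
      simp only [mem_preimage, mem_closedBall, dist_eq_norm]
      have hstep : (y:E3) - (-x) = (x + t • ξ) + (‖(y:E3)‖ - t) • ξ := by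
        calc (y:E3) - (-x) = x + (y:E3) := by abel
          _ = x + ‖(y:E3)‖ • ξ := congrArg (x + ·) hy_eq
          _ = (x + t • ξ) + (‖(y:E3)‖ - t) • ξ := by module
      rw [hstep]
      calc ‖(x + t • ξ) + (‖(y:E3)‖ - t) • ξ‖ ≤ ‖x + t • ξ‖ + ‖(‖(y:E3)‖ - t) • ξ‖ :=
            norm_add_le _ _
        _ ≤ ρ + |‖(y:E3)‖ - t| * 1 := by
            rw [norm_smul, hnξ, Real.norm_eq_abs]
            exact add_le_add hAy le_rfl
        _ ≤ 2 * ρ := by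
            rw [abs_of_nonneg (by linarith [hr.1])]
            have := hr.2
            linarith
    have hcomap : (Measure.comap Subtype.val (volume : Measure E3))
        ((homeomorphUnitSphereProd E3) ⁻¹' (A ×ˢ J)) ≤ ENNReal.ofReal ((4*ρ)^3) := by
      refine le_trans (measure_mono hsub) ?_
      rw [(MeasurableEmbedding.subtype_coe ((measurableSet_singleton (0:E3)).compl)).comap_apply]
      refine le_trans (measure_mono (image_preimage_subset _ _)) ?_
      have := vol_closedBall_le (-x) (2*ρ) (by linarith)
      calc volume (closedBall (-x) (2*ρ)) ≤ ENNReal.ofReal ((2*(2*ρ))^3) := this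
        _ = ENNReal.ofReal ((4*ρ)^3) := by norm_num; ring_nf
    -- combine
    have hmain : sphMeasure A * (ENNReal.ofReal (t^2) * ENNReal.ofReal ρ)
        ≤ ENNReal.ofReal ((4*ρ)^3) := by
      calc sphMeasure A * (ENNReal.ofReal (t^2) * ENNReal.ofReal ρ)
          ≤ sphMeasure A * Measure.volumeIoiPow 2 J := mul_le_mul_right hνJ _
        _ = (Measure.toSphere (volume : Measure E3)).prod (Measure.volumeIoiPow 2) (A ×ˢ J) := by
            rw [Measure.prod_prod]; rfl
        _ = _ := hprod
        _ ≤ _ := hcomap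
    have hb_ne : ENNReal.ofReal (t^2) * ENNReal.ofReal ρ ≠ 0 := by
      simp only [ne_eq, mul_eq_zero, ENNReal.ofReal_eq_zero, not_or, not_le]
      exact ⟨by positivity, hρ⟩
    have hb_top : ENNReal.ofReal (t^2) * ENNReal.ofReal ρ ≠ ⊤ :=
      ENNReal.mul_ne_top ENNReal.ofReal_ne_top ENNReal.ofReal_ne_top
    have hdiv : sphMeasure A ≤ ENNReal.ofReal ((4*ρ)^3) / (ENNReal.ofReal (t^2) * ENNReal.ofReal ρ) :=
      (ENNReal.le_div_iff_mul_le (Or.inl hb_ne) (Or.inl hb_top)).2 hmain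
    refine le_trans hdiv ?_
    rw [← ENNReal.ofReal_mul (by positivity), ← ENNReal.ofReal_div_of_pos (by positivity)]
    apply ENNReal.ofReal_le_ofReal
    rw [div_le_div_iff₀ (by positivity) (by positivity)]
    have h4 : (t+ρ)^2 ≤ 4*t^2 := by nlinarith
    have h5 : (0:ℝ) ≤ ρ^3 := by positivity
    nlinarith [mul_le_mul_of_nonneg_left h4 h5]

lemma band_bound_real {ρ : ℝ} (hρ : 0 < ρ) {t : ℝ} (ht : 0 ≤ t) (x : E3) :
    (sphMeasure {ξ : sphere (0:E3) 1 | ‖x + t • (ξ:E3)‖ ≤ ρ}).toReal ≤ 600 * ρ^2 / (t+ρ)^2 :=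
  ENNReal.toReal_le_of_le_ofReal (by positivity) (band_bound hρ ht x)

end BandAux

section Taylor
open MeasureTheory Metric Set

variable {F G : Type*} [NormedAddCommGroup F] [NormedSpace ℝ F] [CompleteSpace F]
  [NormedAddCommGroup G] [NormedSpace ℝ G] [CompleteSpace G]

instance myCLMmetrizable {W V : Type*} [NormedAddCommGroup W] [NormedSpace ℝ W]
    [SeminormedAddCommGroup V] [NormedSpace ℝ V] :
    TopologicalSpace.PseudoMetrizableSpace (W →L[ℝ] V) :=
  by infer_instance

lemma isoIntegral {α : Type*} [MeasurableSpace α] {μ : MeasureTheory.Measure α}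
    {E F : Type*} [NormedAddCommGroup E] [NormedSpace ℝ E] [CompleteSpace E]
    [NormedAddCommGroup F] [NormedSpace ℝ F] [CompleteSpace F]
    (L : E ≃ₗᵢ[ℝ] F) {φ : α → E} (hφ : Integrable φ μ) :
    ∫ x, L (φ x) ∂μ = L (∫ x, φ x ∂μ) :=
  L.toContinuousLinearEquiv.toContinuousLinearMap.integral_comp_comm hφ

lemma hcs_sphere {W : Type*} [NormedAddCommGroup W] (w : sphere (0:E3) 1 → W) :
    HasCompactSupport w :=
  IsCompact.of_isClosed_subset isCompact_univ isClosed_closure (subset_univ _)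

lemma integrable_sph {W : Type*} [NormedAddCommGroup W] {w : sphere (0:E3) 1 → W}
    (hw : Continuous w) : Integrable w sphMeasure :=
  hw.integrable_of_hasCompactSupport (hcs_sphere w)

set_option maxHeartbeats 1000000 in
set_option synthInstance.maxHeartbeats 400000 in
lemma taylor_main {n : ℕ} {h : E3 → F} (hh : ContDiff ℝ (n:ℕ∞) h) (hsupp : HasCompactSupport h)
    (A : sphere (0:E3) 1 → (F →L[ℝ] G)) (hA : Continuous A) (hA1 : ∀ ξ, ‖A ξ‖ ≤ 1) (c : ℝ) :
    HasFTaylorSeriesUpTo ((n:ℕ∞) : WithTop ℕ∞)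
      (fun x : E3 => ∫ ξ : sphere (0:E3) 1, A ξ (h (x + c • (ξ:E3))) ∂sphMeasure)
      (fun x k => ∫ ξ : sphere (0:E3) 1,
        (A ξ).compContinuousMultilinearMap (iteratedFDeriv ℝ k h (x + c • (ξ:E3))) ∂sphMeasure) := by
  -- bounds on iterated derivatives
  have bD : ∀ k : ℕ, (k:ℕ∞) ≤ n → ∃ M : ℝ, ∀ y, ‖iteratedFDeriv ℝ k h y‖ ≤ M := by
    intro k hk
    exact (hh.continuous_iteratedFDeriv (by exact_mod_cast hk)).bounded_above_of_compact_support
      (hsupp.iteratedFDeriv k)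
  have contD : ∀ k : ℕ, (k:ℕ∞) ≤ n → Continuous (iteratedFDeriv ℝ k h) := by
    intro k hk
    exact hh.continuous_iteratedFDeriv (by exact_mod_cast hk)
  have cont_transl : ∀ (x : E3), Continuous (fun ξ : sphere (0:E3) 1 => x + c • (ξ:E3)) :=
    fun x => continuous_const.add (continuous_subtype_val.const_smul c)
  have contI : ∀ (k : ℕ), (k:ℕ∞) ≤ n → ∀ x : E3, Continuous (fun ξ : sphere (0:E3) 1 =>
      (A ξ).compContinuousMultilinearMap (iteratedFDeriv ℝ k h (x + c • (ξ:E3)))) := by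
    intro k hk x
    have h1 : Continuous (fun ξ : sphere (0:E3) 1 =>
        ((ContinuousLinearMap.compContinuousMultilinearMapL ℝ (fun _ : Fin k => E3) F G) (A ξ),
          iteratedFDeriv ℝ k h (x + c • (ξ:E3)))) :=
      ((ContinuousLinearMap.compContinuousMultilinearMapL ℝ (fun _ : Fin k => E3) F G).continuous.comp hA).prodMk
        ((contD k hk).comp (cont_transl x))
    exact isBoundedBilinearMap_apply.continuous.comp h1
  have contIx : ∀ (k : ℕ), (k:ℕ∞) ≤ n → ∀ ξ : sphere (0:E3) 1, Continuous (fun x : E3 =>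
      (A ξ).compContinuousMultilinearMap (iteratedFDeriv ℝ k h (x + c • (ξ:E3)))) := by
    intro k hk ξ
    exact ((ContinuousLinearMap.compContinuousMultilinearMapL ℝ (fun _ : Fin k => E3) F G)
      (A ξ)).continuous.comp ((contD k hk).comp (continuous_id.add continuous_const))
  have hcompnorm : ∀ (k : ℕ) (ξ : sphere (0:E3) 1) (M : ContinuousMultilinearMap ℝ (fun _ : Fin k => E3) F),
      ‖(A ξ).compContinuousMultilinearMap M‖ ≤ ‖M‖ := by
    intro k ξ M
    calc ‖(A ξ).compContinuousMultilinearMap M‖ ≤ ‖A ξ‖ * ‖M‖ :=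
          (A ξ).norm_compContinuousMultilinearMap_le M
      _ ≤ 1 * ‖M‖ := by
          have := norm_nonneg M
          exact mul_le_mul_of_nonneg_right (hA1 ξ) this
      _ = ‖M‖ := one_mul _
  constructor
  · -- zero_eq
    intro x
    have hint : Integrable (fun ξ : sphere (0:E3) 1 =>
        (A ξ).compContinuousMultilinearMap (iteratedFDeriv ℝ 0 h (x + c • (ξ:E3)))) sphMeasure :=
      integrable_sph (contI 0 (by exact_mod_cast Nat.zero_le n) x)
    have hL := ((continuousMultilinearCurryFin0 ℝ E3 G).toContinuousLinearEquiv.toContinuousLinearMap).integral_comp_comm hint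
    have heq : ∀ ξ : sphere (0:E3) 1,
        ((continuousMultilinearCurryFin0 ℝ E3 G).toContinuousLinearEquiv.toContinuousLinearMap)
          ((A ξ).compContinuousMultilinearMap (iteratedFDeriv ℝ 0 h (x + c • (ξ:E3))))
        = A ξ (h (x + c • (ξ:E3))) := by
      intro ξ
      simp [continuousMultilinearCurryFin0, iteratedFDeriv_zero_apply]
    calc (∫ ξ : sphere (0:E3) 1,
          (A ξ).compContinuousMultilinearMap (iteratedFDeriv ℝ 0 h (x + c • (ξ:E3))) ∂sphMeasure).curry0
        = ((continuousMultilinearCurryFin0 ℝ E3 G).toContinuousLinearEquiv.toContinuousLinearMap)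
            (∫ ξ : sphere (0:E3) 1,
              (A ξ).compContinuousMultilinearMap (iteratedFDeriv ℝ 0 h (x + c • (ξ:E3))) ∂sphMeasure) := rfl
      _ = ∫ ξ : sphere (0:E3) 1,
            ((continuousMultilinearCurryFin0 ℝ E3 G).toContinuousLinearEquiv.toContinuousLinearMap)
              ((A ξ).compContinuousMultilinearMap (iteratedFDeriv ℝ 0 h (x + c • (ξ:E3)))) ∂sphMeasure := hL.symm
      _ = ∫ ξ : sphere (0:E3) 1, A ξ (h (x + c • (ξ:E3))) ∂sphMeasure := by
          exact integral_congr_ae (Filter.Eventually.of_forall heq)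
  · -- fderiv
    intro m hm x₀
    have hmn : (m:ℕ∞) < n := by exact_mod_cast hm
    have hm1 : ((m+1:ℕ):ℕ∞) ≤ n := by exact_mod_cast Nat.succ_le_of_lt (by exact_mod_cast hmn)
    obtain ⟨M1, hM1⟩ := bD (m+1) hm1
    -- fderiv of iterated deriv as iterated deriv of next order
    have hfd : ∀ y : E3, fderiv ℝ (iteratedFDeriv ℝ m h) y
        = (continuousMultilinearCurryLeftEquiv ℝ (fun _ : Fin (m+1) => E3) F)
            (iteratedFDeriv ℝ (m+1) h y) := by
      intro y
      have := congrFun (iteratedFDeriv_succ_eq_comp_left (𝕜 := ℝ) (f := h) (n := m)) y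
      rw [this, Function.comp_apply, LinearIsometryEquiv.apply_symm_apply]
    set Φ' : E3 → (sphere (0:E3) 1) → (E3 →L[ℝ] ContinuousMultilinearMap ℝ (fun _ : Fin m => E3) G) :=
      fun x ξ => ((ContinuousLinearMap.compContinuousMultilinearMapL ℝ (fun _ : Fin m => E3) F G)
        (A ξ)).comp (fderiv ℝ (iteratedFDeriv ℝ m h) (x + c • (ξ:E3))) with hΦ'
    have hDcont : ∀ x, Continuous (fun ξ : sphere (0:E3) 1 => fderiv ℝ (iteratedFDeriv ℝ m h) (x + c • (ξ:E3))) := by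
      intro x
      have heq2 : (fun ξ : sphere (0:E3) 1 => fderiv ℝ (iteratedFDeriv ℝ m h) (x + c • (ξ:E3)))
          = fun ξ : sphere (0:E3) 1 =>
            (continuousMultilinearCurryLeftEquiv ℝ (fun _ : Fin (m+1) => E3) F)
              (iteratedFDeriv ℝ (m+1) h (x + c • (ξ:E3))) := by
        funext ξ; exact hfd _
      rw [heq2]
      exact (continuousMultilinearCurryLeftEquiv ℝ (fun _ : Fin (m+1) => E3) F).continuous.comp
        ((contD (m+1) hm1).comp (cont_transl x))
    have hΦ'cont : ∀ x, Continuous (Φ' x) := by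
      intro x
      exact Continuous.clm_comp
        ((ContinuousLinearMap.compContinuousMultilinearMapL ℝ (fun _ : Fin m => E3) F G).continuous.comp hA)
        (hDcont x)
    have hΦ'bound : ∀ x ξ, ‖Φ' x ξ‖ ≤ M1 := by
      intro x ξ
      calc ‖Φ' x ξ‖ ≤ ‖(ContinuousLinearMap.compContinuousMultilinearMapL ℝ (fun _ : Fin m => E3) F G) (A ξ)‖
            * ‖fderiv ℝ (iteratedFDeriv ℝ m h) (x + c • (ξ:E3))‖ := ContinuousLinearMap.opNorm_comp_le _ _
        _ ≤ 1 * M1 := by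
            apply mul_le_mul
            · apply ContinuousLinearMap.opNorm_le_bound _ zero_le_one
              intro u
              rw [one_mul]
              exact hcompnorm m ξ u
            · rw [hfd, LinearIsometryEquiv.norm_map]
              exact hM1 _
            · exact ContinuousLinearMap.opNorm_nonneg _
            · exact zero_le_one
        _ = M1 := one_mul _
    have hΦ'diff : ∀ ξ : sphere (0:E3) 1, ∀ x : E3, HasFDerivAt (fun x : E3 =>
        (A ξ).compContinuousMultilinearMap (iteratedFDeriv ℝ m h (x + c • (ξ:E3)))) (Φ' x ξ) x := by
      intro ξ x
      have h1 : HasFDerivAt (fun x : E3 => x + c • (ξ:E3)) (ContinuousLinearMap.id ℝ E3) x :=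
        (hasFDerivAt_id x).add_const _
      have h2 : HasFDerivAt (iteratedFDeriv ℝ m h)
          (fderiv ℝ (iteratedFDeriv ℝ m h) (x + c • (ξ:E3))) (x + c • (ξ:E3)) :=
        ((hh.differentiable_iteratedFDeriv (by exact_mod_cast hmn)) _).hasFDerivAt
      have h3 := ((ContinuousLinearMap.compContinuousMultilinearMapL ℝ (fun _ : Fin m => E3) F G)
        (A ξ)).hasFDerivAt.comp x ((h2.comp x h1))
      simpa [hΦ', Function.comp_def] using h3
    have key := hasFDerivAt_integral_of_dominated_of_fderiv_le (μ := sphMeasure)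
      (F := fun x ξ => (A ξ).compContinuousMultilinearMap (iteratedFDeriv ℝ m h (x + c • (ξ:E3))))
      (F' := Φ') (x₀ := x₀) (bound := fun _ => M1) (Metric.ball_mem_nhds x₀ zero_lt_one)
      (Filter.Eventually.of_forall (fun x => (contI m hmn.le x).aestronglyMeasurable))
      (integrable_sph (contI m hmn.le x₀))
      ((hΦ'cont x₀).aestronglyMeasurable)
      (Filter.Eventually.of_forall (fun ξ => fun x _ => hΦ'bound x ξ))
      (integrable_const M1)
      (Filter.Eventually.of_forall (fun ξ => fun x _ => hΦ'diff ξ x))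
    -- now rewrite the derivative
    have hint1 : Integrable (fun ξ : sphere (0:E3) 1 =>
        (A ξ).compContinuousMultilinearMap (iteratedFDeriv ℝ (m+1) h (x₀ + c • (ξ:E3)))) sphMeasure :=
      integrable_sph (contI (m+1) hm1 x₀)
    have hcurry : (∫ ξ : sphere (0:E3) 1,
        (A ξ).compContinuousMultilinearMap (iteratedFDeriv ℝ (m+1) h (x₀ + c • (ξ:E3))) ∂sphMeasure).curryLeft
        = ∫ ξ : sphere (0:E3) 1, Φ' x₀ ξ ∂sphMeasure := by
      have hLeq := isoIntegral (E := ContinuousMultilinearMap ℝ (fun _ : Fin (m+1) => E3) G)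
        (F := E3 →L[ℝ] ContinuousMultilinearMap ℝ (fun _ : Fin m => E3) G)
        (continuousMultilinearCurryLeftEquiv ℝ (fun _ : Fin (m+1) => E3) G) hint1
      calc (∫ ξ : sphere (0:E3) 1,
            (A ξ).compContinuousMultilinearMap (iteratedFDeriv ℝ (m+1) h (x₀ + c • (ξ:E3))) ∂sphMeasure).curryLeft
          = (continuousMultilinearCurryLeftEquiv ℝ (fun _ : Fin (m+1) => E3) G)
              (∫ ξ : sphere (0:E3) 1,
                (A ξ).compContinuousMultilinearMap (iteratedFDeriv ℝ (m+1) h (x₀ + c • (ξ:E3))) ∂sphMeasure) := rfl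
        _ = ∫ ξ : sphere (0:E3) 1,
              (continuousMultilinearCurryLeftEquiv ℝ (fun _ : Fin (m+1) => E3) G)
                ((A ξ).compContinuousMultilinearMap (iteratedFDeriv ℝ (m+1) h (x₀ + c • (ξ:E3)))) ∂sphMeasure := hLeq.symm
        _ = ∫ ξ : sphere (0:E3) 1, Φ' x₀ ξ ∂sphMeasure := by
            refine integral_congr_ae (Filter.Eventually.of_forall (fun ξ => ?_))
            apply ContinuousLinearMap.ext
            intro v
            apply ContinuousMultilinearMap.ext
            intro w
            simp only [hΦ', ContinuousLinearMap.coe_comp', Function.comp_apply, hfd]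
            have hc : ∀ (M : ContinuousMultilinearMap ℝ (fun _ : Fin m => E3) F),
                (ContinuousLinearMap.compContinuousMultilinearMapL ℝ (fun _ : Fin m => E3) F G) (A ξ) M
                = (A ξ).compContinuousMultilinearMap M := fun _ => rfl
            rw [hc _]
            simp [ContinuousLinearMap.compContinuousMultilinearMap_coe,
              continuousMultilinearCurryLeftEquiv_apply]
    rw [hcurry]
    exact key
  · -- continuity
    intro m hm
    have hm' : (m:ℕ∞) ≤ n := by exact_mod_cast hm
    obtain ⟨M, hM⟩ := bD m hm'
    apply continuous_of_dominated (bound := fun _ => M)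
    · exact fun x => (contI m hm' x).aestronglyMeasurable
    · intro x
      refine Filter.Eventually.of_forall (fun ξ => ?_)
      exact le_trans (hcompnorm m ξ _) (hM _)
    · exact integrable_const M
    · exact Filter.Eventually.of_forall (fun ξ => contIx m hm' ξ)

end Taylor

section Corollaries
open MeasureTheory Metric Set

variable {F G : Type*} [NormedAddCommGroup F] [NormedSpace ℝ F] [CompleteSpace F]
  [NormedAddCommGroup G] [NormedSpace ℝ G] [CompleteSpace G]

lemma taylor_contDiff {n : ℕ} {h : E3 → F} (hh : ContDiff ℝ (n:ℕ∞) h)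
    (hsupp : HasCompactSupport h)
    (A : sphere (0:E3) 1 → (F →L[ℝ] G)) (hA : Continuous A) (hA1 : ∀ ξ, ‖A ξ‖ ≤ 1) (c : ℝ) :
    ContDiff ℝ (n:ℕ∞) (fun x : E3 => ∫ ξ : sphere (0:E3) 1, A ξ (h (x + c • (ξ:E3))) ∂sphMeasure) :=
  (taylor_main hh hsupp A hA hA1 c).contDiff

lemma taylor_iteratedFDeriv {n : ℕ} {h : E3 → F} (hh : ContDiff ℝ (n:ℕ∞) h)
    (hsupp : HasCompactSupport h)
    (A : sphere (0:E3) 1 → (F →L[ℝ] G)) (hA : Continuous A) (hA1 : ∀ ξ, ‖A ξ‖ ≤ 1) (c : ℝ)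
    {k : ℕ} (hk : k ≤ n) (x : E3) :
    iteratedFDeriv ℝ k (fun x : E3 => ∫ ξ : sphere (0:E3) 1, A ξ (h (x + c • (ξ:E3))) ∂sphMeasure) x
      = ∫ ξ : sphere (0:E3) 1,
          (A ξ).compContinuousMultilinearMap (iteratedFDeriv ℝ k h (x + c • (ξ:E3))) ∂sphMeasure :=
  ((taylor_main hh hsupp A hA hA1 c).eq_iteratedFDeriv (by exact_mod_cast hk) x).symm

lemma vanish_iterated {h : E3 → F} {ρ : ℝ} (hvan : ∀ y, ρ < ‖y‖ → h y = 0) (k : ℕ) :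
    ∀ y, ρ < ‖y‖ → iteratedFDeriv ℝ k h y = 0 := by
  intro y hy
  have hU : IsOpen {z : E3 | ρ < ‖z‖} := isOpen_lt continuous_const continuous_norm
  have h1 : iteratedFDeriv ℝ k h y = iteratedFDerivWithin ℝ k h {z : E3 | ρ < ‖z‖} y :=
    (iteratedFDerivWithin_of_isOpen k hU hy).symm
  have h2 : iteratedFDerivWithin ℝ k h {z : E3 | ρ < ‖z‖} y
      = iteratedFDerivWithin ℝ k (fun _ => (0:F)) {z : E3 | ρ < ‖z‖} y :=
    iteratedFDerivWithin_congr (fun z hz => hvan z hz) hy k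
  have h3 : iteratedFDerivWithin ℝ k (fun _ => (0:F)) {z : E3 | ρ < ‖z‖} y
      = iteratedFDeriv ℝ k (fun _ => (0:F)) y := iteratedFDerivWithin_of_isOpen k hU hy
  rw [h1, h2, h3, iteratedFDeriv_zero_fun]
  rfl

lemma deriv_bound {n : ℕ} {h : E3 → F} (hh : ContDiff ℝ (n:ℕ∞) h)
    (hsupp : HasCompactSupport h)
    (A : sphere (0:E3) 1 → (F →L[ℝ] G)) (hA : Continuous A) (hA1 : ∀ ξ, ‖A ξ‖ ≤ 1) (c : ℝ)
    {k : ℕ} (hk : k ≤ n) {ρ : ℝ} (hvan : ∀ y, ρ < ‖y‖ → h y = 0)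
    {M : ℝ} (hM : ∀ y, ‖iteratedFDeriv ℝ k h y‖ ≤ M) (x : E3) :
    ‖iteratedFDeriv ℝ k
        (fun x : E3 => ∫ ξ : sphere (0:E3) 1, A ξ (h (x + c • (ξ:E3))) ∂sphMeasure) x‖
      ≤ M * (sphMeasure {ξ : sphere (0:E3) 1 | ‖x + c • (ξ:E3)‖ ≤ ρ}).toReal := by
  rw [taylor_iteratedFDeriv hh hsupp A hA hA1 c hk x]
  have hAS : MeasurableSet {ξ : sphere (0:E3) 1 | ‖x + c • (ξ:E3)‖ ≤ ρ} :=
    (IsClosed.preimage ((continuous_const.add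
      (continuous_subtype_val.const_smul c)).norm) isClosed_Iic).measurableSet
  have hMnn : 0 ≤ M := le_trans (norm_nonneg _) (hM x)
  have hind : Integrable ({ξ : sphere (0:E3) 1 | ‖x + c • (ξ:E3)‖ ≤ ρ}.indicator
      (fun _ => M)) sphMeasure := (integrable_const M).indicator hAS
  refine le_trans (norm_integral_le_of_norm_le hind
    (Filter.Eventually.of_forall (fun ξ => ?_))) ?_
  · by_cases hmem : ‖x + c • (ξ:E3)‖ ≤ ρ
    · rw [Set.indicator_of_mem (show ξ ∈ {ξ : sphere (0:E3) 1 | ‖x + c • (ξ:E3)‖ ≤ ρ} from hmem)]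
      calc ‖(A ξ).compContinuousMultilinearMap (iteratedFDeriv ℝ k h (x + c • (ξ:E3)))‖
          ≤ ‖A ξ‖ * ‖iteratedFDeriv ℝ k h (x + c • (ξ:E3))‖ :=
            (A ξ).norm_compContinuousMultilinearMap_le _
        _ ≤ 1 * M := mul_le_mul (hA1 ξ) (hM _) (norm_nonneg _) zero_le_one
        _ = M := one_mul M
    · rw [Set.indicator_of_notMem (show ξ ∉ {ξ : sphere (0:E3) 1 | ‖x + c • (ξ:E3)‖ ≤ ρ} from hmem)]
      rw [vanish_iterated hvan k _ (not_le.1 hmem)]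
      have : (A ξ).compContinuousMultilinearMap (0 : ContinuousMultilinearMap ℝ (fun _ : Fin k => E3) F) = 0 := by
        apply ContinuousMultilinearMap.ext
        intro w
        simp [ContinuousLinearMap.compContinuousMultilinearMap_coe]
      rw [this]
      simp
  · rw [integral_indicator_const M hAS]
    rw [smul_eq_mul, mul_comm]
    exact le_rfl

lemma vanish_closed {W : Type*} [NormedAddCommGroup W] {φ : E3 → W} (hφ : Continuous φ)
    {ρ : ℝ} (hρ : 0 < ρ) (h0 : ∀ y, ρ < ‖y‖ → φ y = 0) : ∀ y, ρ ≤ ‖y‖ → φ y = 0 := by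
  intro y hy
  rcases lt_or_eq_of_le hy with hlt | heq
  · exact h0 y hlt
  · have hyn : ‖y‖ = ρ := heq.symm
    have htend : Filter.Tendsto (fun m : ℕ => ((1:ℝ) + 1/(m+1)) • y) Filter.atTop (nhds y) := by
      have h1 : Filter.Tendsto (fun m : ℕ => (1:ℝ) + 1/(m+1)) Filter.atTop (nhds 1) := by
        have := tendsto_one_div_add_atTop_nhds_zero_nat (𝕜 := ℝ)
        have h2 := Filter.Tendsto.const_add (1:ℝ) this
        simpa using h2
      have := h1.smul_const y
      simpa using this
    have hzero : ∀ m : ℕ, φ (((1:ℝ) + 1/(m+1)) • y) = 0 := by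
      intro m
      apply h0
      rw [norm_smul, Real.norm_eq_abs, hyn]
      have hpos : (0:ℝ) < 1/(m+1) := by positivity
      have habs : |(1:ℝ) + 1/(m+1)| = 1 + 1/(m+1) := abs_of_pos (by linarith)
      rw [habs]
      nlinarith
    have := (hφ.tendsto y).comp htend
    rw [show (φ ∘ fun m : ℕ => ((1:ℝ) + 1/(m+1)) • y) = fun _ => 0 from funext hzero] at this
    exact (tendsto_nhds_unique tendsto_const_nhds this).symm

end Corollaries

section KirchRepr
open MeasureTheory Metric Set Real

lemma kirch_repr {f : E3 → ℝ} (hf : ContDiff ℝ 1 f) (hfs : HasCompactSupport f)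
    (g : E3 → ℝ) (ε : ℝ) (x : E3) (t : ℝ) :
    kirch ε f g x t =
      ε * (t / (4 * π)) * (∫ ξ : sphere (0:E3) 1, (f (x + t • (ξ:E3)) + g (x + t • (ξ:E3))) ∂sphMeasure)
      + ε * ((1/(4*π)) * (∫ ξ : sphere (0:E3) 1, f (x + t • (ξ:E3)) ∂sphMeasure)
          + (t/(4*π)) * (∫ ξ : sphere (0:E3) 1, fderiv ℝ f (x + t • (ξ:E3)) (ξ:E3) ∂sphMeasure)) := by
  obtain ⟨M, hM⟩ := (hf.continuous_fderiv one_ne_zero).bounded_above_of_compact_support (hfs.fderiv ℝ)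
  have hS : ∀ τ : ℝ, HasDerivAt (fun τ : ℝ => ∫ ξ : sphere (0:E3) 1, f (x + τ • (ξ:E3)) ∂sphMeasure)
      (∫ ξ : sphere (0:E3) 1, fderiv ℝ f (x + τ • (ξ:E3)) (ξ:E3) ∂sphMeasure) τ := by
    intro τ₀
    have hmeas : ∀ τ : ℝ, AEStronglyMeasurable (fun ξ : sphere (0:E3) 1 => f (x + τ • (ξ:E3))) sphMeasure := by
      intro τ
      exact (hf.continuous.comp
        (continuous_const.add (continuous_subtype_val.const_smul τ))).aestronglyMeasurable
    have hder : ∀ ξ : sphere (0:E3) 1, ∀ τ ∈ Metric.ball τ₀ 1,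
        HasDerivAt (fun τ : ℝ => f (x + τ • (ξ:E3))) (fderiv ℝ f (x + τ • (ξ:E3)) (ξ:E3)) τ := by
      intro ξ τ _
      have h1 : HasDerivAt (fun τ : ℝ => x + τ • (ξ:E3)) ((ξ:E3)) τ := by
        have := (hasDerivAt_id τ).smul_const ((ξ:E3))
        simpa using this.const_add x
      have h2 : HasFDerivAt f (fderiv ℝ f (x + τ • (ξ:E3))) (x + τ • (ξ:E3)) :=
        ((hf.differentiable one_ne_zero) _).hasFDerivAt
      have := h2.comp_hasDerivAt τ h1
      simpa [Function.comp_def] using this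
    have hbound : ∀ ξ : sphere (0:E3) 1, ∀ τ ∈ Metric.ball τ₀ 1,
        ‖fderiv ℝ f (x + τ • (ξ:E3)) (ξ:E3)‖ ≤ M := by
      intro ξ τ _
      calc ‖fderiv ℝ f (x + τ • (ξ:E3)) (ξ:E3)‖
          ≤ ‖fderiv ℝ f (x + τ • (ξ:E3))‖ * ‖(ξ:E3)‖ := ContinuousLinearMap.le_opNorm _ _
        _ = ‖fderiv ℝ f (x + τ • (ξ:E3))‖ := by rw [norm_eq_of_mem_sphere ξ, mul_one]
        _ ≤ M := hM _
    have hF'meas : AEStronglyMeasurable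
        (fun ξ : sphere (0:E3) 1 => fderiv ℝ f (x + τ₀ • (ξ:E3)) (ξ:E3)) sphMeasure := by
      have hc : Continuous (fun ξ : sphere (0:E3) 1 => fderiv ℝ f (x + τ₀ • (ξ:E3)) (ξ:E3)) :=
        isBoundedBilinearMap_apply.continuous.comp
          ((((hf.continuous_fderiv one_ne_zero).comp
            (continuous_const.add (continuous_subtype_val.const_smul τ₀)))).prodMk continuous_subtype_val)
      exact hc.aestronglyMeasurable
    have := hasDerivAt_integral_of_dominated_loc_of_deriv_le (F := fun τ (ξ : sphere (0:E3) 1) => f (x + τ • (ξ:E3)))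
      (F' := fun τ (ξ : sphere (0:E3) 1) => fderiv ℝ f (x + τ • (ξ:E3)) (ξ:E3))
      (x₀ := τ₀) (bound := fun _ => M) (Metric.ball_mem_nhds τ₀ zero_lt_one)
      (Filter.Eventually.of_forall hmeas)
      (integrable_sph (hf.continuous.comp (continuous_const.add (continuous_subtype_val.const_smul τ₀))))
      hF'meas
      (Filter.Eventually.of_forall hbound)
      (integrable_const M)
      (Filter.Eventually.of_forall hder)
    exact this.2
  have hMain : HasDerivAt (fun τ : ℝ => (τ / (4*π)) * ∫ ξ : sphere (0:E3) 1, f (x + τ • (ξ:E3)) ∂sphMeasure)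
      ((1/(4*π)) * (∫ ξ : sphere (0:E3) 1, f (x + t • (ξ:E3)) ∂sphMeasure)
        + (t/(4*π)) * (∫ ξ : sphere (0:E3) 1, fderiv ℝ f (x + t • (ξ:E3)) (ξ:E3) ∂sphMeasure)) t := by
    have h1 : HasDerivAt (fun τ : ℝ => τ / (4*π)) (1/(4*π)) t := (hasDerivAt_id t).div_const _
    exact h1.mul (hS t)
  unfold kirch sphInt
  rw [hMain.deriv]

end KirchRepr

set_option maxHeartbeats 4000000 in
set_option synthInstance.maxHeartbeats 1000000 in
/-- Lemma 2.1: decay estimate for the solution of the free wave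
equation, together with the strong Huygens support property. -/
theorem free_wave_decay :
    ∃ γ : ℝ, 0 < γ ∧
      ∀ ρ : ℝ, 1 ≤ ρ → ∀ ν : ℕ, ν ≤ 3 →
      ∀ f g : E3 → ℝ,
        ContDiff ℝ ((ν + 2 : ℕ) : ℕ∞) f → ContDiff ℝ ((ν + 1 : ℕ) : ℕ∞) g →
        (∀ x : E3, ρ < ‖x‖ → f x = 0) → (∀ x : E3, ρ < ‖x‖ → g x = 0) →
      ∀ ε : ℝ, 0 < ε →
        (∀ k : ℕ, k ≤ ν → ∀ x : E3, ∀ t : ℝ, 0 ≤ t →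
          ρ ^ k * ‖iteratedFDeriv ℝ k (fun y : E3 => kirch ε f g y t) x‖ ≤
            ε * γ * ((t + ρ) / ρ)⁻¹ * Nnorm ρ ν f g) ∧
        (∀ x : E3, ∀ t : ℝ, 0 ≤ t → ρ ≤ |t - ‖x‖| → kirch ε f g x t = 0) := by
  refine ⟨1000, by norm_num, ?_⟩
  intro ρ hρ ν hν f g hf hg hf0 hg0 ε hε
  have hρ0 : (0:ℝ) < ρ := lt_of_lt_of_le one_pos hρ
  have hπ : (3:ℝ) < π := Real.pi_gt_three
  have hπ0 : (0:ℝ) < π := by linarith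
  -- compact supports
  have hfs : HasCompactSupport f := HasCompactSupport.intro (isCompact_closedBall (0:E3) ρ)
    (fun y hy => hf0 y (by simpa [mem_closedBall_zero_iff] using hy))
  have hgs : HasCompactSupport g := HasCompactSupport.intro (isCompact_closedBall (0:E3) ρ)
    (fun y hy => hg0 y (by simpa [mem_closedBall_zero_iff] using hy))
  have hdfs : HasCompactSupport (fderiv ℝ f) := hfs.fderiv ℝ
  -- smoothness
  have hf1 : ContDiff ℝ 1 f := hf.of_le (by exact_mod_cast (by omega : 1 ≤ ν+2))
  have hfν : ContDiff ℝ ((ν:ℕ):ℕ∞) f := hf.of_le (by exact_mod_cast (by omega : ν ≤ ν+2))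
  have hgν : ContDiff ℝ ((ν:ℕ):ℕ∞) g := hg.of_le (by exact_mod_cast (by omega : ν ≤ ν+1))
  have hdfν : ContDiff ℝ ((ν:ℕ):ℕ∞) (fderiv ℝ f) := hf.fderiv_right
    (by exact_mod_cast (by omega : ν + 1 ≤ ν+2))
  have hfgν : ContDiff ℝ ((ν:ℕ):ℕ∞) (fun y => f y + g y) := hfν.add hgν
  have hfgs : HasCompactSupport (fun y => f y + g y) := hfs.add hgs
  -- vanishing of fderiv f outside the ball
  have hdf0 : ∀ y : E3, ρ < ‖y‖ → fderiv ℝ f y = 0 := by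
    intro y hy
    have hU : IsOpen {z : E3 | ρ < ‖z‖} := isOpen_lt continuous_const continuous_norm
    have hev : f =ᶠ[nhds y] (fun _ => (0:ℝ)) :=
      Filter.eventually_of_mem (hU.mem_nhds hy) (fun z hz => hf0 z hz)
    rw [hev.fderiv_eq]
    exact fderiv_const_apply 0
  -- the operators A
  have hA1n : ∀ ξ : sphere (0:E3) 1, ‖(fun _ : sphere (0:E3) 1 => ContinuousLinearMap.id ℝ ℝ) ξ‖ ≤ 1 :=
    fun _ => ContinuousLinearMap.norm_id_le
  have hA3c : Continuous (fun ξ : sphere (0:E3) 1 => ContinuousLinearMap.apply ℝ ℝ ((ξ:E3))) :=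
    (ContinuousLinearMap.apply ℝ ℝ).continuous.comp continuous_subtype_val
  have hA3n : ∀ ξ : sphere (0:E3) 1, ‖ContinuousLinearMap.apply ℝ ℝ ((ξ:E3))‖ ≤ 1 := by
    intro ξ
    refine ContinuousLinearMap.opNorm_le_bound _ zero_le_one (fun B => ?_)
    rw [one_mul]
    calc ‖(ContinuousLinearMap.apply ℝ ℝ ((ξ:E3))) B‖ = ‖B ((ξ:E3))‖ := rfl
      _ ≤ ‖B‖ * ‖(ξ:E3)‖ := B.le_opNorm _
      _ = ‖B‖ := by rw [norm_eq_of_mem_sphere ξ, mul_one]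
  -- sup bounds
  set Q : ℕ → ℝ := fun j => ⨆ y : E3, (‖iteratedFDeriv ℝ j f y‖ + ‖iteratedFDeriv ℝ j g y‖) with hQdef
  have hQb : ∀ j : ℕ, j ≤ ν + 1 →
      BddAbove (range fun y : E3 => ‖iteratedFDeriv ℝ j f y‖ + ‖iteratedFDeriv ℝ j g y‖) := by
    intro j hj
    obtain ⟨C1, hC1⟩ := (hf.continuous_iteratedFDeriv
      (by exact_mod_cast (by omega : j ≤ ν+2))).bounded_above_of_compact_support (hfs.iteratedFDeriv j)
    obtain ⟨C2, hC2⟩ := (hg.continuous_iteratedFDeriv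
      (by exact_mod_cast (by omega : j ≤ ν+1))).bounded_above_of_compact_support (hgs.iteratedFDeriv j)
    refine ⟨C1 + C2, ?_⟩
    rintro _ ⟨y, rfl⟩
    exact add_le_add (hC1 y) (hC2 y)
  have hQle : ∀ j : ℕ, j ≤ ν + 1 → ∀ y : E3,
      ‖iteratedFDeriv ℝ j f y‖ + ‖iteratedFDeriv ℝ j g y‖ ≤ Q j :=
    fun j hj y => le_ciSup (hQb j hj) y
  have hQnn : ∀ j : ℕ, 0 ≤ Q j :=
    fun j => Real.iSup_nonneg (fun y => by positivity)
  -- N relations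
  have hNnn : 0 ≤ Nnorm ρ ν f g := by
    apply add_nonneg
    · exact Finset.sum_nonneg (fun j _ => Real.iSup_nonneg (fun y => by positivity))
    · exact Finset.sum_nonneg (fun j _ => Real.iSup_nonneg (fun y => by positivity))
  have hNterm : ∀ j : ℕ, j ≤ ν + 1 → ρ^(j+1) * Q j ≤ Nnorm ρ ν f g := by
    intro j hj
    have hmul : ρ^(j+1) * Q j
        = ⨆ y : E3, ρ^(j+1) * (‖iteratedFDeriv ℝ j f y‖ + ‖iteratedFDeriv ℝ j g y‖) :=
      Real.mul_iSup_of_nonneg (by positivity) _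
    rw [hmul]
    have h1 : (⨆ y : E3, ρ^(j+1) * (‖iteratedFDeriv ℝ j f y‖ + ‖iteratedFDeriv ℝ j g y‖))
        ≤ ∑ i ∈ Finset.range (ν + 2),
          ⨆ y : E3, ρ ^ (i + 1) * (‖iteratedFDeriv ℝ i f y‖ + ‖iteratedFDeriv ℝ i g y‖) :=
      Finset.single_le_sum (f := fun i =>
        ⨆ y : E3, ρ ^ (i + 1) * (‖iteratedFDeriv ℝ i f y‖ + ‖iteratedFDeriv ℝ i g y‖))
        (fun i _ => Real.iSup_nonneg (fun y => by positivity)) (Finset.mem_range.2 (by omega))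
    have h2 : 0 ≤ ∑ i ∈ Finset.range (ν + 3), ⨆ y : E3, ρ ^ i * ‖iteratedFDeriv ℝ i f y‖ :=
      Finset.sum_nonneg (fun i _ => Real.iSup_nonneg (fun y => by positivity))
    unfold Nnorm
    linarith
  constructor
  · -- main estimate
    intro k hk x t ht
    set P : ℝ := t + ρ with hPdef
    have hPpos : (0:ℝ) < P := by simp only [hPdef]; linarith
    have hP1 : (1:ℝ) ≤ P := by simp only [hPdef]; linarith
    have htP : t ≤ P := by simp only [hPdef]; linarith
    set σ : ℝ := (sphMeasure {ξ : sphere (0:E3) 1 | ‖x + t • (ξ:E3)‖ ≤ ρ}).toReal with hσdef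
    have hσ0 : 0 ≤ σ := ENNReal.toReal_nonneg
    have hσ : σ ≤ 600 * ρ^2 / P^2 := band_bound_real hρ0 ht x
    have hσ2 : σ * P^2 ≤ 600 * ρ^2 := by
      rw [← le_div_iff₀ (by positivity)]
      exact hσ
    -- the three pieces
    set u1 : E3 → ℝ := fun y => ∫ ξ : sphere (0:E3) 1,
      (fun _ : sphere (0:E3) 1 => ContinuousLinearMap.id ℝ ℝ) ξ
        ((fun z => f z + g z) (y + t • (ξ:E3))) ∂sphMeasure with hu1
    set u2 : E3 → ℝ := fun y => ∫ ξ : sphere (0:E3) 1,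
      (fun _ : sphere (0:E3) 1 => ContinuousLinearMap.id ℝ ℝ) ξ (f (y + t • (ξ:E3))) ∂sphMeasure with hu2
    set u3 : E3 → ℝ := fun y => ∫ ξ : sphere (0:E3) 1,
      (fun ξ : sphere (0:E3) 1 => ContinuousLinearMap.apply ℝ ℝ ((ξ:E3))) ξ
        (fderiv ℝ f (y + t • (ξ:E3))) ∂sphMeasure with hu3
    -- derivative bounds
    have hM1 : ∀ y : E3, ‖iteratedFDeriv ℝ k (fun z => f z + g z) y‖ ≤ Q k := by
      intro y
      have : iteratedFDeriv ℝ k (fun z => f z + g z) y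
          = iteratedFDeriv ℝ k f y + iteratedFDeriv ℝ k g y := by
        have := iteratedFDeriv_add_apply (𝕜 := ℝ) (i := k) (f := f) (g := g) (x := y)
          (hf.of_le (by exact_mod_cast (by omega : k ≤ ν+2))).contDiffAt
          (hg.of_le (by exact_mod_cast (by omega : k ≤ ν+1))).contDiffAt
        exact this
      rw [this]
      exact le_trans (norm_add_le _ _) (hQle k (by omega) y)
    have hM2 : ∀ y : E3, ‖iteratedFDeriv ℝ k f y‖ ≤ Q k := by
      intro y
      refine le_trans ?_ (hQle k (by omega) y)
      have : (0:ℝ) ≤ ‖iteratedFDeriv ℝ k g y‖ := norm_nonneg _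
      linarith
    have hM3 : ∀ y : E3, ‖iteratedFDeriv ℝ k (fderiv ℝ f) y‖ ≤ Q (k+1) := by
      intro y
      rw [norm_iteratedFDeriv_fderiv]
      refine le_trans ?_ (hQle (k+1) (by omega) y)
      have : (0:ℝ) ≤ ‖iteratedFDeriv ℝ (k+1) g y‖ := norm_nonneg _
      linarith
    have hB1 : ‖iteratedFDeriv ℝ k u1 x‖ ≤ Q k * σ := by
      rw [hu1]
      exact deriv_bound hfgν hfgs _ continuous_const hA1n t hk
        (fun y hy => by simp [hf0 y hy, hg0 y hy]) hM1 x
    have hB2 : ‖iteratedFDeriv ℝ k u2 x‖ ≤ Q k * σ := by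
      rw [hu2]
      exact deriv_bound hfν hfs _ continuous_const hA1n t hk hf0 hM2 x
    have hB3 : ‖iteratedFDeriv ℝ k u3 x‖ ≤ Q (k+1) * σ := by
      rw [hu3]
      exact deriv_bound hdfν hdfs _ hA3c hA3n t hk hdf0 hM3 x
    -- smoothness of the pieces
    have hCD1 : ContDiff ℝ ((k:ℕ):ℕ∞) u1 :=
      (taylor_contDiff hfgν hfgs _ continuous_const hA1n t).of_le
        (by exact_mod_cast (hk : k ≤ ν))
    have hCD2 : ContDiff ℝ ((k:ℕ):ℕ∞) u2 :=
      (taylor_contDiff hfν hfs _ continuous_const hA1n t).of_le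
        (by exact_mod_cast (hk : k ≤ ν))
    have hCD3 : ContDiff ℝ ((k:ℕ):ℕ∞) u3 :=
      (taylor_contDiff hdfν hdfs _ hA3c hA3n t).of_le
        (by exact_mod_cast (hk : k ≤ ν))
    -- representation
    have hrepr : (fun y => kirch ε f g y t)
        = (ε * (t/(4*π))) • u1 + ((ε * (1/(4*π))) • u2 + (ε * (t/(4*π))) • u3) := by
      funext y
      simp only [Pi.add_apply, Pi.smul_apply, smul_eq_mul]
      rw [kirch_repr hf1 hfs g ε y t]
      have e1 : u1 y = ∫ ξ : sphere (0:E3) 1, (f (y + t • (ξ:E3)) + g (y + t • (ξ:E3))) ∂sphMeasure := rfl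
      have e2 : u2 y = ∫ ξ : sphere (0:E3) 1, f (y + t • (ξ:E3)) ∂sphMeasure := rfl
      have e3 : u3 y = ∫ ξ : sphere (0:E3) 1, fderiv ℝ f (y + t • (ξ:E3)) (ξ:E3) ∂sphMeasure := rfl
      rw [e1, e2, e3]
      ring
    have hS1 : ContDiff ℝ ((k:ℕ):ℕ∞) ((ε * (t/(4*π))) • u1) := by
      exact hCD1.const_smul (ε * (t/(4*π)))
    have hS2 : ContDiff ℝ ((k:ℕ):ℕ∞) ((ε * (1/(4*π))) • u2) := by
      exact hCD2.const_smul (ε * (1/(4*π)))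
    have hS3 : ContDiff ℝ ((k:ℕ):ℕ∞) ((ε * (t/(4*π))) • u3) := by
      exact hCD3.const_smul (ε * (t/(4*π)))
    have hS23 : ContDiff ℝ ((k:ℕ):ℕ∞) ((ε * (1/(4*π))) • u2 + (ε * (t/(4*π))) • u3) := by exact hS2.add hS3
    have hadd1 : iteratedFDeriv ℝ k
        ((ε * (t/(4*π))) • u1 + ((ε * (1/(4*π))) • u2 + (ε * (t/(4*π))) • u3)) x
        = iteratedFDeriv ℝ k ((ε * (t/(4*π))) • u1) x
          + iteratedFDeriv ℝ k ((ε * (1/(4*π))) • u2 + (ε * (t/(4*π))) • u3) x :=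
      iteratedFDeriv_add_apply hS1.contDiffAt hS23.contDiffAt
    have hadd2 : iteratedFDeriv ℝ k
        ((ε * (1/(4*π))) • u2 + (ε * (t/(4*π))) • u3) x
        = iteratedFDeriv ℝ k ((ε * (1/(4*π))) • u2) x
          + iteratedFDeriv ℝ k ((ε * (t/(4*π))) • u3) x :=
      iteratedFDeriv_add_apply hS2.contDiffAt hS3.contDiffAt
    have hs1 : iteratedFDeriv ℝ k ((ε * (t/(4*π))) • u1) x
        = (ε * (t/(4*π))) • iteratedFDeriv ℝ k u1 x := iteratedFDeriv_const_smul_apply hCD1.contDiffAt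
    have hs2 : iteratedFDeriv ℝ k ((ε * (1/(4*π))) • u2) x
        = (ε * (1/(4*π))) • iteratedFDeriv ℝ k u2 x := iteratedFDeriv_const_smul_apply hCD2.contDiffAt
    have hs3 : iteratedFDeriv ℝ k ((ε * (t/(4*π))) • u3) x
        = (ε * (t/(4*π))) • iteratedFDeriv ℝ k u3 x := iteratedFDeriv_const_smul_apply hCD3.contDiffAt
    have hsum : iteratedFDeriv ℝ k (fun y => kirch ε f g y t) x
        = (ε*(t/(4*π))) • iteratedFDeriv ℝ k u1 x
          + ((ε*(1/(4*π))) • iteratedFDeriv ℝ k u2 x + (ε*(t/(4*π))) • iteratedFDeriv ℝ k u3 x) := by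
      rw [hrepr, hadd1, hadd2, hs1, hs2, hs3]
    have ha1 : (0:ℝ) ≤ ε * (t/(4*π)) := mul_nonneg hε.le (div_nonneg ht (by positivity))
    have ha2 : (0:ℝ) ≤ ε * (1/(4*π)) := mul_nonneg hε.le (by positivity)
    have hnorm : ‖iteratedFDeriv ℝ k (fun y => kirch ε f g y t) x‖
        ≤ ε*(t/(4*π)) * (Q k * σ) + (ε*(1/(4*π)) * (Q k * σ) + ε*(t/(4*π)) * (Q (k+1) * σ)) := by
      rw [hsum]
      refine le_trans (norm_add_le _ _) ?_
      refine add_le_add ?_ (le_trans (norm_add_le _ _) (add_le_add ?_ ?_))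
      · rw [norm_smul, Real.norm_eq_abs, abs_of_nonneg ha1]
        exact mul_le_mul_of_nonneg_left hB1 ha1
      · rw [norm_smul, Real.norm_eq_abs, abs_of_nonneg ha2]
        exact mul_le_mul_of_nonneg_left hB2 ha2
      · rw [norm_smul, Real.norm_eq_abs, abs_of_nonneg ha1]
        exact mul_le_mul_of_nonneg_left hB3 ha1
    -- final numeric chase
    have hPinv : ((t + ρ) / ρ)⁻¹ = ρ / P := by
      rw [inv_div]
    rw [hPinv, show ε * 1000 * (ρ / P) * Nnorm ρ ν f g = 1000*ε*ρ*(Nnorm ρ ν f g)/P by ring,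
      le_div_iff₀ hPpos]
    have hstep : ρ^k * ‖iteratedFDeriv ℝ k (fun y => kirch ε f g y t) x‖ * P
        ≤ ρ^k * (ε*(t/(4*π)) * (Q k * σ) + (ε*(1/(4*π)) * (Q k * σ) + ε*(t/(4*π)) * (Q (k+1) * σ))) * P :=
      mul_le_mul_of_nonneg_right (mul_le_mul_of_nonneg_left hnorm (by positivity)) hPpos.le
    refine le_trans hstep ?_
    have hN1 : ρ^k * ρ * Q k ≤ Nnorm ρ ν f g := by
      have := hNterm k (by omega)
      rw [pow_succ] at this
      exact this
    have hN3 : ρ^k * ρ^2 * Q (k+1) ≤ Nnorm ρ ν f g := by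
      have := hNterm (k+1) (by omega)
      calc ρ^k * ρ^2 * Q (k+1) = ρ^(k+2) * Q (k+1) := by ring
        _ ≤ _ := this
    have h_tσP : t * (σ * P) ≤ 600 * ρ^2 := by
      nlinarith [mul_le_mul_of_nonneg_right htP (mul_nonneg hσ0 hPpos.le)]
    have h_σP : σ * P ≤ 600 * ρ^2 := by
      nlinarith [mul_le_mul_of_nonneg_left hP1 (mul_nonneg hσ0 hPpos.le)]
    have hc12 : (1:ℝ)/(4*π) ≤ 1/12 :=
      one_div_le_one_div_of_le (by norm_num) (by linarith)
    have hρN : 0 ≤ ρ * Nnorm ρ ν f g := mul_nonneg hρ0.le hNnn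
    calc ρ^k * (ε*(t/(4*π)) * (Q k * σ) + (ε*(1/(4*π)) * (Q k * σ) + ε*(t/(4*π)) * (Q (k+1) * σ))) * P
        = ε*(1/(4*π))*( (ρ^k*Q k)*(t*(σ*P)) + ((ρ^k*Q k)*(σ*P) + (ρ^k*Q (k+1))*(t*(σ*P))) ) := by
          ring
      _ ≤ ε*(1/(4*π))*( (ρ^k*Q k)*(600*ρ^2) + ((ρ^k*Q k)*(600*ρ^2) + (ρ^k*Q (k+1))*(600*ρ^2)) ) := by
          apply mul_le_mul_of_nonneg_left ?_ ha2
          have g1 := mul_le_mul_of_nonneg_left h_tσP (mul_nonneg (by positivity : (0:ℝ) ≤ ρ^k) (hQnn k))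
          have g2 := mul_le_mul_of_nonneg_left h_σP (mul_nonneg (by positivity : (0:ℝ) ≤ ρ^k) (hQnn k))
          have g3 := mul_le_mul_of_nonneg_left h_tσP (mul_nonneg (by positivity : (0:ℝ) ≤ ρ^k) (hQnn (k+1)))
          linarith
      _ = ε*(1/(4*π))*( 600*(ρ*(ρ^k*ρ*Q k)) + (600*(ρ*(ρ^k*ρ*Q k)) + 600*(ρ^k*ρ^2*Q (k+1))) ) := by
          ring
      _ ≤ ε*(1/(4*π))*( 600*(ρ*Nnorm ρ ν f g) + (600*(ρ*Nnorm ρ ν f g) + 600*(ρ*Nnorm ρ ν f g)) ) := by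
          apply mul_le_mul_of_nonneg_left ?_ ha2
          have g1 := mul_le_mul_of_nonneg_left hN1 hρ0.le
          have g3 : ρ^k*ρ^2*Q (k+1) ≤ ρ * Nnorm ρ ν f g := by nlinarith
          linarith
      _ = ε*(1/(4*π))*(1800*(ρ*Nnorm ρ ν f g)) := by ring
      _ ≤ ε*(1/12)*(1800*(ρ*Nnorm ρ ν f g)) := by
          apply mul_le_mul_of_nonneg_right (mul_le_mul_of_nonneg_left hc12 hε.le) (by linarith)
      _ = 150*(ε*(ρ*Nnorm ρ ν f g)) := by ring
      _ ≤ 1000*ε*ρ*Nnorm ρ ν f g := by nlinarith [mul_nonneg hε.le hρN]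
  · -- Huygens
    intro x t ht hsep
    rw [kirch_repr hf1 hfs g ε x t]
    have hnorm : ∀ ξ : sphere (0:E3) 1, ρ ≤ ‖x + t • (ξ:E3)‖ := by
      intro ξ
      refine le_trans hsep ?_
      have h1 := abs_norm_sub_norm_le x (-(t • (ξ:E3)))
      have h2 : ‖-(t • (ξ:E3))‖ = t := by
        rw [norm_neg, norm_smul, norm_eq_of_mem_sphere ξ, Real.norm_eq_abs, abs_of_nonneg ht, mul_one]
      rw [h2, sub_neg_eq_add] at h1
      calc |t - ‖x‖| = |‖x‖ - t| := abs_sub_comm _ _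
        _ ≤ ‖x + t • (ξ:E3)‖ := h1
    have hfC : ∀ y : E3, ρ ≤ ‖y‖ → f y = 0 := vanish_closed hf.continuous hρ0 hf0
    have hgC : ∀ y : E3, ρ ≤ ‖y‖ → g y = 0 := vanish_closed hg.continuous hρ0 hg0
    have hdfC : ∀ y : E3, ρ ≤ ‖y‖ → fderiv ℝ f y = 0 :=
      vanish_closed (hf1.continuous_fderiv one_ne_zero) hρ0 hdf0
    have hz1 : (∫ ξ : sphere (0:E3) 1, (f (x + t • (ξ:E3)) + g (x + t • (ξ:E3))) ∂sphMeasure) = 0 := by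
      rw [integral_eq_zero_of_ae]
      refine Filter.Eventually.of_forall (fun ξ => ?_)
      show f (x + t • (ξ:E3)) + g (x + t • (ξ:E3)) = 0
      rw [hfC _ (hnorm ξ), hgC _ (hnorm ξ), add_zero]
    have hz2 : (∫ ξ : sphere (0:E3) 1, f (x + t • (ξ:E3)) ∂sphMeasure) = 0 := by
      rw [integral_eq_zero_of_ae]
      refine Filter.Eventually.of_forall (fun ξ => ?_)
      show f (x + t • (ξ:E3)) = 0
      exact hfC _ (hnorm ξ)
    have hz3 : (∫ ξ : sphere (0:E3) 1, fderiv ℝ f (x + t • (ξ:E3)) (ξ:E3) ∂sphMeasure) = 0 := by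
      rw [integral_eq_zero_of_ae]
      refine Filter.Eventually.of_forall (fun ξ => ?_)
      show fderiv ℝ f (x + t • (ξ:E3)) (ξ:E3) = 0
      rw [hdfC _ (hnorm ξ)]
      rfl
    rw [hz1, hz2, hz3]
    ring
end

section
/- Let p > 1, F > 0 and D₀ > 0, and let (D_j) be a sequence of positive reals satisfying D_{j+1} ≥ F D_j^p / p^{2(j+1)} for all j ≥ 0. Then there exists a real constant q, depending only on p and F, such that D_j ≥ exp(p^j (log D₀ + q)) for all j ≥ 0. -/
open MeasureTheory Metric Real Set

/-!
Taking logarithms, `L_j = log D_j` satisfies `L_{j+1} ≥ p L_j + log F - 2 log p · (j + 1)`.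
A linear drift `κ (j + 1)` is absorbed by the affine shift `L_j - a j - b` with `(p - 1) a = κ`
and `b` large: the shifted sequence satisfies `v_{j+1} ≥ p v_j`, hence `v_j ≥ p^j v_0`.
-/

theorem pow_mul_le_of_mul_le_succ {v : ℕ → ℝ} {p : ℝ} (hp : 0 ≤ p)
    (h : ∀ j, p * v j ≤ v (j + 1)) (j : ℕ) : p ^ j * v 0 ≤ v j := by
  induction j with
  | zero => simp
  | succ j ih =>
    calc p ^ (j + 1) * v 0 = p * (p ^ j * v 0) := by ring
      _ ≤ p * v j := mul_le_mul_of_nonneg_left ih hp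
      _ ≤ v (j + 1) := h j

theorem exists_pow_mul_sub_le_of_linear_drift {p κ : ℝ} (hp : 1 < p) (hκ : 0 ≤ κ) (c : ℝ) :
    ∃ b : ℝ, ∀ L : ℕ → ℝ, (∀ j : ℕ, p * L j + c - κ * ((j : ℝ) + 1) ≤ L (j + 1)) →
      ∀ j : ℕ, p ^ j * (L 0 - b) ≤ L j := by
  have hp1 : 0 < p - 1 := sub_pos.mpr hp
  set a := κ / (p - 1)
  have ha : 0 ≤ a := div_nonneg hκ hp1.le
  have ha_mul : a * (p - 1) = κ := div_mul_cancel₀ κ hp1.ne'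
  set b := max 0 ((κ + a - c) / (p - 1))
  have hb : 0 ≤ b := le_max_left _ _
  have hb_mul : κ + a - c ≤ b * (p - 1) := (div_le_iff₀ hp1).mp (le_max_right _ _)
  refine ⟨b, fun L hL j => ?_⟩
  have hshift : ∀ j : ℕ, p * (L j - a * j - b) ≤ L (j + 1) - a * (j + 1 : ℕ) - b := by
    intro j
    have := hL j
    push_cast
    nlinarith
  calc p ^ j * (L 0 - b) = p ^ j * (L 0 - a * (0 : ℕ) - b) := by simp
    _ ≤ L j - a * j - b := pow_mul_le_of_mul_le_succ (by linarith) hshift j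
    _ ≤ L j := by nlinarith [mul_nonneg ha (Nat.cast_nonneg (α := ℝ) j)]

theorem log_add_mul_log_sub_le_log {F p x y e : ℝ} (hF : 0 < F) (hp : 0 < p) (hx : 0 < x)
    (h : F * x ^ p / p ^ e ≤ y) : log F + p * log x - e * log p ≤ log y := by
  have hlhs : 0 < F * x ^ p / p ^ e := by positivity
  have := log_le_log hlhs h
  rwa [log_div (by positivity) (by positivity), log_mul hF.ne' (by positivity),
    log_rpow hx, log_rpow hp] at this

/-- sequences satisfying `D_{j+1} ≥ F D_j^p / p^{2(j+1)}` obey the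
doubly exponential lower bound `D_j ≥ exp(p^j (log D₀ + q))` for a constant `q`
depending only on `p` and `F`. -/
theorem iteration_sequence_lower_bound (p F : ℝ) (hp : 1 < p) (hF : 0 < F) :
    ∃ q : ℝ, ∀ D : ℕ → ℝ, (∀ j, 0 < D j) →
      (∀ j : ℕ, F * D j ^ p / p ^ (2 * ((j : ℝ) + 1)) ≤ D (j + 1)) →
      ∀ j : ℕ, Real.exp (p ^ (j : ℝ) * (Real.log (D 0) + q)) ≤ D j := by
  have hp0 : 0 < p := zero_lt_one.trans hp
  obtain ⟨b, hb⟩ :=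
    exists_pow_mul_sub_le_of_linear_drift hp (mul_nonneg zero_le_two (log_pos hp).le) (log F)
  refine ⟨-b, fun D hD hrec j => ?_⟩
  have hlog (j : ℕ) : p * log (D j) + log F - 2 * log p * ((j : ℝ) + 1) ≤ log (D (j + 1)) := by
    have := log_add_mul_log_sub_le_log hF hp0 (hD j) (hrec j)
    linarith
  rw [← le_log_iff_exp_le (hD j), rpow_natCast, ← sub_eq_add_neg]
  exact hb (fun j => log (D j)) hlog j
end

section
/- Let p > 1 with p ≠ 3/2, ρ ≥ 1, and set q = max{2(p−1), 1}. Then there is a constant C depending only on p such that for all real numbers r, t with 0 < r ≤ t one has: (1/r) ∫_{t−r}^{t+r} (α + 2ρ)^{−p(q+1)+2} dα ≤ C (t + r + 2ρ)^{−2p²+p+2} if 1 < p < 3/2, and (1/r) ∫_{t−r}^{t+r} (α + 2ρ)^{−p(q+1)+2} dα ≤ C (t + r + 2ρ)^{−1} (t − r + 2ρ)^{−(2p−3)} if p > 3/2. -/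
open MeasureTheory Metric Real Set

/-!
After the substitution `x = α + 2ρ` the quantity is twice the average of `x ^ e`,
`e = -p(q+1) + 2`, over `[B, B + 2r]` with `B = t - r + 2ρ ≥ 2`. The average is at most
`B ^ e` when `r` is small compared with `B`, and is bounded through the explicit antiderivative
otherwise.
For `1 < p < 3/2` one has `-1 < e ≤ 0`, which gives `≲ (B + 2r) ^ e`; for `p > 3/2` one has
`e < -1`, which gives `≲ (B + 2r)⁻¹ B ^ (e + 1)`. Since `B + 2r ≥ B ≥ 1`, what remains is a
comparison of exponents.
-/

namespace RpowAverage

open scoped Interval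

variable {a b e r : ℝ}

theorem integral_rpow_le_mul_rpow_of_nonpos (he : e ≤ 0) (ha : 0 < a) (hab : a ≤ b) :
    ∫ x in a..b, x ^ e ≤ (b - a) * a ^ e := by
  have hbound : ∀ x ∈ Ι a b, ‖x ^ e‖ ≤ a ^ e := by
    intro x hx
    rw [uIoc_of_le hab] at hx
    rw [Real.norm_of_nonneg (rpow_nonneg (ha.le.trans hx.1.le) e)]
    exact rpow_le_rpow_of_nonpos ha hx.1.le he
  calc ∫ x in a..b, x ^ e ≤ ‖∫ x in a..b, x ^ e‖ := le_norm_self _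
    _ ≤ a ^ e * |b - a| := intervalIntegral.norm_integral_le_of_norm_le_const hbound
    _ = (b - a) * a ^ e := by rw [abs_of_nonneg (sub_nonneg.2 hab), mul_comm]

theorem integral_rpow_le_of_neg_one_lt (he : -1 < e) (ha : 0 ≤ a) :
    ∫ x in a..b, x ^ e ≤ b ^ (e + 1) / (e + 1) := by
  rw [integral_rpow (Or.inl he)]
  gcongr
  · linarith
  · exact sub_le_self _ (rpow_nonneg ha _)

theorem integral_rpow_le_of_lt_neg_one (he : e < -1) (ha : 0 < a) (hab : a ≤ b) :
    ∫ x in a..b, x ^ e ≤ a ^ (e + 1) / -(e + 1) := by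
  have h0 : (0 : ℝ) ∉ [[a, b]] := by
    rw [uIcc_of_le hab]; exact fun h => ha.not_ge h.1
  rw [integral_rpow (Or.inr ⟨he.ne, h0⟩), ← neg_div_neg_eq, neg_sub]
  gcongr
  · linarith
  · exact sub_le_self _ (rpow_nonneg (ha.le.trans hab) _)

theorem average_rpow_le_of_neg_one_lt (he : -1 < e) (he0 : e ≤ 0) (ha : 0 ≤ a) (hr : 0 < r) :
    (1 / r) * ∫ x in a..a + 2 * r, x ^ e ≤ (2 ^ (1 - e) + 4 / (e + 1)) * (a + 2 * r) ^ e := by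
  have he1 : 0 < e + 1 := by linarith
  rcases le_or_gt (2 * r) a with hsmall | hlarge
  · have hA : (a + 2 * r) / 2 ≤ a := by linarith
    calc (1 / r) * ∫ x in a..a + 2 * r, x ^ e
        ≤ (1 / r) * ((a + 2 * r - a) * a ^ e) := by
          gcongr; exact integral_rpow_le_mul_rpow_of_nonpos he0 (by linarith) (by linarith)
      _ = 2 * a ^ e := by field_simp; ring
      _ ≤ 2 * ((a + 2 * r) / 2) ^ e :=
          mul_le_mul_of_nonneg_left (rpow_le_rpow_of_nonpos (by positivity) hA he0) zero_le_two
      _ = 2 ^ (1 - e) * (a + 2 * r) ^ e := by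
          rw [div_rpow (by positivity) zero_le_two, rpow_sub zero_lt_two, rpow_one]; ring
      _ ≤ (2 ^ (1 - e) + 4 / (e + 1)) * (a + 2 * r) ^ e := by
          gcongr; exact le_add_of_nonneg_right (by positivity)
  · have hA : 0 < a + 2 * r := by positivity
    calc (1 / r) * ∫ x in a..a + 2 * r, x ^ e
        ≤ (4 / (a + 2 * r)) * ((a + 2 * r) ^ (e + 1) / (e + 1)) := by
          refine mul_le_mul ?_ (integral_rpow_le_of_neg_one_lt he ha) ?_ (by positivity)
          · rw [div_le_div_iff₀ hr hA]; linarith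
          · exact intervalIntegral.integral_nonneg (by linarith)
              fun x hx => rpow_nonneg (ha.trans hx.1) e
      _ = 4 / (e + 1) * (a + 2 * r) ^ e := by
          rw [rpow_add hA, rpow_one]; field_simp
      _ ≤ (2 ^ (1 - e) + 4 / (e + 1)) * (a + 2 * r) ^ e := by
          gcongr; exact le_add_of_nonneg_left (by positivity)

theorem average_rpow_le_of_lt_neg_one (he : e < -1) (ha : 0 < a) (hr : 0 < r) :
    (1 / r) * ∫ x in a..a + 2 * r, x ^ e ≤
      (4 + 4 / -(e + 1)) * (a + 2 * r)⁻¹ * a ^ (e + 1) := by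
  have he1 : 0 < -(e + 1) := by linarith
  have hA : 0 < a + 2 * r := by positivity
  rcases le_or_gt (2 * r) a with hsmall | hlarge
  · calc (1 / r) * ∫ x in a..a + 2 * r, x ^ e
        ≤ (1 / r) * ((a + 2 * r - a) * a ^ e) := by
          gcongr; exact integral_rpow_le_mul_rpow_of_nonpos (by linarith) ha (by linarith)
      _ = 2 / a * a ^ (e + 1) := by rw [rpow_add ha, rpow_one]; field_simp; ring
      _ ≤ 4 / (a + 2 * r) * a ^ (e + 1) := by
          gcongr 1
          rw [div_le_div_iff₀ ha hA]; linarith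
      _ = 4 * (a + 2 * r)⁻¹ * a ^ (e + 1) := by rw [div_eq_mul_inv]
      _ ≤ (4 + 4 / -(e + 1)) * (a + 2 * r)⁻¹ * a ^ (e + 1) := by
          gcongr; exact le_add_of_nonneg_right (by positivity)
  · calc (1 / r) * ∫ x in a..a + 2 * r, x ^ e
        ≤ (4 / (a + 2 * r)) * (a ^ (e + 1) / -(e + 1)) := by
          refine mul_le_mul ?_ (integral_rpow_le_of_lt_neg_one he ha (by linarith)) ?_
            (by positivity)
          · rw [div_le_div_iff₀ hr hA]; linarith
          · exact intervalIntegral.integral_nonneg (by linarith)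
              fun x hx => rpow_nonneg (ha.le.trans hx.1) e
      _ = 4 / -(e + 1) * (a + 2 * r)⁻¹ * a ^ (e + 1) := by ring
      _ ≤ (4 + 4 / -(e + 1)) * (a + 2 * r)⁻¹ * a ^ (e + 1) := by
          gcongr; exact le_add_of_nonneg_left (by positivity)

end RpowAverage

open RpowAverage in
/-- the `α`-integral estimate (2.21): bounds for
`(1/r) ∫_{t-r}^{t+r} (α + 2ρ)^{-p(q+1)+2} dα` in the two regimes of `p`. -/
theorem alpha_integral_estimate (p : ℝ) (hp : 1 < p) (hpne : p ≠ 3 / 2) :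
    ∃ C : ℝ, 0 < C ∧
      ∀ ρ : ℝ, 1 ≤ ρ → ∀ r t : ℝ, 0 < r → r ≤ t →
        (p < 3 / 2 →
          (1 / r) * (∫ α in (t - r)..(t + r), (α + 2 * ρ) ^ (-(p * (qexp p + 1)) + 2)) ≤
            C * (t + r + 2 * ρ) ^ (-2 * p ^ 2 + p + 2)) ∧
        (3 / 2 < p →
          (1 / r) * (∫ α in (t - r)..(t + r), (α + 2 * ρ) ^ (-(p * (qexp p + 1)) + 2)) ≤
            C * (t + r + 2 * ρ) ^ (-1 : ℝ) * (t - r + 2 * ρ) ^ (-(2 * p - 3))) := by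
  have hshift (ρ r t e : ℝ) : ∫ α in (t - r)..(t + r), (α + 2 * ρ) ^ e =
      ∫ x in (t - r + 2 * ρ)..(t - r + 2 * ρ) + 2 * r, x ^ e := by
    rw [intervalIntegral.integral_comp_add_right (· ^ e)]; congr 1; ring
  have hright (ρ r t : ℝ) : t + r + 2 * ρ = t - r + 2 * ρ + 2 * r := by ring
  rcases lt_or_gt_of_ne hpne with hp32 | hp32
  · have he : -(p * (qexp p + 1)) + 2 = 2 - 2 * p := by
      rw [qexp, max_eq_right (by linarith)]; ring
    have hK : 0 < 2 ^ (1 - (2 - 2 * p)) + 4 / (2 - 2 * p + 1) :=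
      add_pos (by positivity) (div_pos four_pos (by linarith))
    refine ⟨_, hK, fun ρ hρ r t hr hrt => ⟨fun _ => ?_, fun h => absurd h (by linarith)⟩⟩
    rw [he, hshift ρ r t, hright ρ r t]
    refine (average_rpow_le_of_neg_one_lt (by linarith) (by linarith) (by linarith) hr).trans ?_
    exact mul_le_mul_of_nonneg_left
      (rpow_le_rpow_of_exponent_le (by linarith) (by nlinarith)) hK.le
  · have he : -(p * (qexp p + 1)) + 2 = -2 * p ^ 2 + p + 2 := by
      rw [qexp, max_eq_left (by linarith)]; ring
    have hK : 0 < 4 + 4 / -(-2 * p ^ 2 + p + 2 + 1) :=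
      add_pos four_pos (div_pos four_pos (by nlinarith))
    refine ⟨_, hK, fun ρ hρ r t hr hrt => ⟨fun h => absurd h (by linarith), fun _ => ?_⟩⟩
    rw [he, hshift ρ r t, hright ρ r t, rpow_neg_one]
    refine (average_rpow_le_of_lt_neg_one (by nlinarith) (by linarith) hr).trans ?_
    exact mul_le_mul_of_nonneg_left
      (rpow_le_rpow_of_exponent_le (by linarith) (by nlinarith)) (by positivity)
end
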